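/- If E_α ≠ 0, then α = s + j for some eigenvalue s of the endomorphism induced by h on M/n̄ M and some integer j ≤ 0. In particular, for every m ∈ ℝ the set {α ∈ ℂ : E_α ≠ 0 and Re α > m} is finite. -/

import Mathlib

set_option linter.unusedSectionVars false

noncomputable section

namespace GeomJacquet

variable (g : Type*) [LieRing g] [LieAlgebra ℂ g]

/-- The nilpotent subalgebra `n̄ ⊆ g`: the sum of the eigenspaces of `ad H` with negative
(integer) eigenvalues. -/
def nbar (H : g) : Submodule ℂ g :=
  ⨆ z : {z : ℤ // z < 0}, Module.End.eigenspace (LieAlgebra.ad ℂ g H) ((z : ℤ) : ℂ)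

/-- `ad H` is diagonalizable with all eigenvalues in `ℤ`. -/
def IsIntDiagonalizable (H : g) : Prop :=
  (⨆ z : ℤ, Module.End.eigenspace (LieAlgebra.ad ℂ g H) (z : ℂ)) = ⊤

variable (M : Type*) [AddCommGroup M] [Module ℂ M] [LieRingModule g M] [LieModule ℂ g M]

/-- The `n̄`-adic filtration `n̄^k M` on a representation `M` of `g`. -/
def fil (H : g) : ℕ → Submodule ℂ M
  | 0 => ⊤
  | k + 1 => Submodule.span ℂ
      {m : M | ∃ x ∈ nbar g H, ∃ v ∈ fil H k, ⁅x, v⁆ = m}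

/-- `M` is finitely generated as a module over `U(n̄)` (acting through the `g`-action):
there is a finite subset `S ⊆ M` such that the only `ℂ`-subspace of `M` containing `S` and
stable under the action of `n̄` is `M` itself. -/
def IsUnbarFG (H : g) : Prop :=
  ∃ S : Finset M, ∀ W : Submodule ℂ M, (↑S : Set M) ⊆ W →
    (∀ x ∈ nbar g H, ∀ m ∈ W, ⁅x, m⁆ ∈ W) → W = ⊤

theorem lie_mem_nbar (H : g) {x : g} (hx : x ∈ nbar g H) : ⁅H, x⁆ ∈ nbar g H := by
  revert hx
  refine fun hx => Submodule.iSup_induction _ (motive := fun y => ⁅H, y⁆ ∈ nbar g H) hx ?_ ?_ ?_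
  · rintro ⟨z, hz⟩ y hy
    have : ⁅H, y⁆ = ((z : ℤ) : ℂ) • y := by
      have := (Module.End.mem_eigenspace_iff).1 hy
      simpa [LieAlgebra.ad_apply] using this
    rw [this]
    exact Submodule.smul_mem _ _ (le_iSup (fun z : {z : ℤ // z < 0} =>
      Module.End.eigenspace (LieAlgebra.ad ℂ g H) ((z : ℤ) : ℂ)) ⟨z, hz⟩ hy)
  · simp
  · intro a b ha hb
    rw [lie_add]
    exact Submodule.add_mem _ ha hb

theorem lie_H_mem_fil (H : g) (k : ℕ) : ∀ m ∈ fil g M H k, ⁅H, m⁆ ∈ fil g M H k := by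
  induction k with
  | zero => intro m _; trivial
  | succ k ih =>
    intro m hm
    refine Submodule.span_induction ?_ ?_ ?_ ?_ hm
    · rintro m ⟨x, hx, v, hv, rfl⟩
      rw [leibniz_lie]
      exact Submodule.add_mem _
        (Submodule.subset_span ⟨⁅H, x⁆, lie_mem_nbar g H hx, v, hv, rfl⟩)
        (Submodule.subset_span ⟨x, hx, ⁅H, v⁆, ih v hv, rfl⟩)
    · simp
    · intro a b _ _ ha hb; rw [lie_add]; exact Submodule.add_mem _ ha hb
    · intro c a _ ha; rw [lie_smul]; exact Submodule.smul_mem _ c ha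

theorem fil_succ_le (H : g) (k : ℕ) : fil g M H (k + 1) ≤ fil g M H k := by
  induction k with
  | zero => exact le_top
  | succ k ih =>
    refine Submodule.span_le.2 ?_
    rintro m ⟨x, hx, v, hv, rfl⟩
    exact Submodule.subset_span ⟨x, hx, v, ih hv, rfl⟩

/-- The endomorphism of `M/n̄^k M` induced by (the action of) `h`. -/
def hQuot (H : g) (k : ℕ) : Module.End ℂ (M ⧸ fil g M H k) :=
  Submodule.mapQ _ _ ((LieModule.toEnd ℂ g M) H)
    (fun m hm => by
      simpa [Submodule.mem_comap, LieModule.toEnd_apply_apply] using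
        lie_H_mem_fil g M H k m hm)

/-- The canonical projection `M/n̄^(k+1) M → M/n̄^k M`. -/
def proj (H : g) (k : ℕ) : (M ⧸ fil g M H (k + 1)) →ₗ[ℂ] M ⧸ fil g M H k :=
  Submodule.mapQ _ _ LinearMap.id (fun _ hm => fil_succ_le g M H k hm)

/-- The `n̄`-adic completion `M̂ = lim_k M/n̄^k M`, realized as the space of compatible
sequences in `Π k, M/n̄^k M`. -/
def completion (H : g) : Submodule ℂ (Π k : ℕ, M ⧸ fil g M H k) where
  carrier := {v | ∀ k, proj g M H k (v (k + 1)) = v k}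
  zero_mem' := by intro k; simp
  add_mem' := by intro u v hu hv k; simp [map_add, hu k, hv k]
  smul_mem' := by intro c v hv k; simp [map_smul, hv k]

theorem proj_hQuot (H : g) (k : ℕ) (w : M ⧸ fil g M H (k + 1)) :
    proj g M H k (hQuot g M H (k + 1) w) = hQuot g M H k (proj g M H k w) := by
  obtain ⟨m, rfl⟩ := Submodule.Quotient.mk_surjective _ w
  simp [proj, hQuot, Submodule.mapQ_apply]

/-- The endomorphism `ĥ` of the completion `M̂` induced componentwise by `h`. -/
def hhat (H : g) : Module.End ℂ (completion g M H) where
  toFun v := ⟨fun k => hQuot g M H k (v.1 k), by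
    intro k; rw [proj_hQuot, v.2 k]⟩
  map_add' u v := by ext k; simp
  map_smul' c v := by ext k; simp

/-- The canonical map `M → M̂`. -/
def toCompletion (H : g) : M →ₗ[ℂ] completion g M H where
  toFun m := ⟨fun k => Submodule.Quotient.mk m, by
    intro k; simp [proj, Submodule.mapQ_apply]⟩
  map_add' u v := by ext k; simp
  map_smul' c v := by ext k; simp

/-- `E_α ⊆ M̂`: the generalized `α`-eigenspace `⋃_N ker((ĥ - α)^N)` of `ĥ`. -/
def E (H : g) (α : ℂ) : Submodule ℂ (completion g M H) :=
  Module.End.maxGenEigenspace (hhat g M H) α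

/-!
The piece `n̄^k M / n̄^(k+1) M` is spanned by classes of `⁅x, v⁆` with `v ∈ n̄^(k-1) M` and `x`
an `ad h`-eigenvector of negative integer eigenvalue `z`, and `p(h) ⁅x, v⁆ = ⁅x, p(h + z) v⁆`.
By induction on `k`, every `v ∈ M` is therefore moved into `n̄^k M` by `p(h)` for a polynomial `p`
whose roots are eigenvalues of `h` on `M/n̄M` shifted by nonpositive integers. Hence every
eigenvalue of `h` on `M/n̄^k M` is of this form, and so is every eigenvalue of `ĥ`, since an
eigenvector of `ĥ` has a nonzero component in some `M/n̄^k M`. Finite generation makes `M/n̄M`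
finite-dimensional, which gives the finiteness statement.
-/

open Polynomial

section Annihilation

variable {K V V' : Type*} [Field K] [AddCommGroup V] [Module K V] [AddCommGroup V'] [Module K V']

theorem aeval_apply_of_comp_eq {f : Module.End K V} {f' : Module.End K V'} (L : V →ₗ[K] V')
    (hL : L ∘ₗ f = f' ∘ₗ L) (p : K[X]) (v : V) : L (aeval f p v) = aeval f' p (L v) := by
  induction p using Polynomial.induction_on' with
  | add p q hp hq => simp only [map_add, LinearMap.add_apply, hp, hq]
  | monomial n a =>
    simp only [aeval_monomial, Module.End.mul_apply, Module.algebraMap_end_apply, map_smul]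
    rw [← LinearMap.comp_apply L, ← Module.End.commute_pow_left_of_commute hL.symm,
      LinearMap.comp_apply]

/-- Vectors sent into `W` by `p(f)` for some polynomial `p` all of whose roots in `K` lie in `S`. -/
def annihModulo (f : Module.End K V) (S : Set K) (W : Submodule K V) (hW : W ≤ W.comap f) :
    Submodule K V where
  carrier := {v | ∃ p : K[X], (∀ a, p.IsRoot a → a ∈ S) ∧ aeval f p v ∈ W}
  zero_mem' := ⟨1, by simp, by simp⟩
  add_mem' := by
    rintro u v ⟨p, hpS, hp⟩ ⟨q, hqS, hq⟩
    refine ⟨p * q, fun a ha => (root_mul.1 ha).elim (hpS a) (hqS a), ?_⟩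
    have hu : aeval f (p * q) u = aeval f q (aeval f p u) := by
      rw [mul_comm, map_mul, Module.End.mul_apply]
    have hv : aeval f (p * q) v = aeval f p (aeval f q v) := by rw [map_mul, Module.End.mul_apply]
    rw [map_add, hu, hv]
    exact W.add_mem (aeval_apply_smul_mem_of_le_comap hp q f hW)
      (aeval_apply_smul_mem_of_le_comap hq p f hW)
  smul_mem' := by
    rintro c v ⟨p, hpS, hp⟩
    exact ⟨p, hpS, by rw [map_smul]; exact W.smul_mem c hp⟩

variable {f : Module.End K V} {S : Set K}

theorem annihModulo_le_of_le_annihModulo {W W' : Submodule K V} (hW : W ≤ W.comap f)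
    (hW' : W' ≤ W'.comap f) (h : W ≤ annihModulo f S W' hW') :
    annihModulo f S W hW ≤ annihModulo f S W' hW' := by
  rintro v ⟨p, hpS, hp⟩
  obtain ⟨q, hqS, hq⟩ := h hp
  refine ⟨q * p, fun a ha => (root_mul.1 ha).elim (hqS a) (hpS a), ?_⟩
  rwa [map_mul, Module.End.mul_apply]

theorem mem_of_hasEigenvalue_mapQ {W : Submodule K V} (hW : W ≤ W.comap f)
    (htop : annihModulo f S W hW = ⊤) {α : K}
    (hα : Module.End.HasEigenvalue (W.mapQ W f hW) α) : α ∈ S := by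
  obtain ⟨v, hv⟩ := hα.exists_hasEigenvector
  obtain ⟨v, rfl⟩ := W.mkQ_surjective v
  obtain ⟨p, hpS, hp⟩ := (htop ▸ Submodule.mem_top : v ∈ annihModulo f S W hW)
  have hL : W.mkQ ∘ₗ f = W.mapQ W f hW ∘ₗ W.mkQ := (Submodule.mapQ_mkQ _ _ _).symm
  have hzero : p.eval α • W.mkQ v = 0 := by
    rw [← Module.End.aeval_apply_of_hasEigenvector hv, ← aeval_apply_of_comp_eq _ hL,
      Submodule.mkQ_apply, Submodule.Quotient.mk_eq_zero]
    exact hp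
  exact hpS α ((smul_eq_zero.1 hzero).resolve_right hv.2)

end Annihilation

def shiftedEigenvalues (H : g) : Set ℂ :=
  {α | ∃ (s : ℂ) (j : ℤ), Module.End.HasEigenvalue (hQuot g M H 1) s ∧ j ≤ 0 ∧ α = s + (j : ℂ)}

theorem add_intCast_mem_shiftedEigenvalues {H : g} {α : ℂ} (hα : α ∈ shiftedEigenvalues g M H)
    {z : ℤ} (hz : z ≤ 0) : α + z ∈ shiftedEigenvalues g M H := by
  obtain ⟨s, j, hs, hj, rfl⟩ := hα
  exact ⟨s, j + z, hs, by omega, by push_cast; ring⟩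

theorem fil_le_comap_toEnd (H : g) (k : ℕ) :
    fil g M H k ≤ (fil g M H k).comap (LieModule.toEnd ℂ g M H) :=
  lie_H_mem_fil g M H k

theorem lie_mem_fil_succ {H : g} {k : ℕ} {x : g} (hx : x ∈ nbar g H) {v : M}
    (hv : v ∈ fil g M H k) : ⁅x, v⁆ ∈ fil g M H (k + 1) :=
  Submodule.subset_span ⟨x, hx, v, hv, rfl⟩

theorem aeval_comp_X_sub_C_lie {H x : g} {c : ℂ} (hx : ⁅H, x⁆ = c • x) (p : ℂ[X]) (v : M) :
    aeval (LieModule.toEnd ℂ g M H) (p.comp (X - C c)) ⁅x, v⁆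
      = ⁅x, aeval (LieModule.toEnd ℂ g M H) p v⁆ := by
  have hL : LieModule.toEnd ℂ g M x ∘ₗ LieModule.toEnd ℂ g M H
      = (LieModule.toEnd ℂ g M H - algebraMap ℂ _ c) ∘ₗ LieModule.toEnd ℂ g M x := by
    ext w
    simp [leibniz_lie H x w, hx]
  rw [aeval_comp, map_sub, aeval_X, aeval_C]
  exact (aeval_apply_of_comp_eq _ hL p v).symm

theorem fil_le_annihModulo_fil_succ (H : g) [FiniteDimensional ℂ (M ⧸ fil g M H 1)] (k : ℕ) :
    fil g M H k ≤ annihModulo (LieModule.toEnd ℂ g M H) (shiftedEigenvalues g M H)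
      (fil g M H (k + 1)) (fil_le_comap_toEnd g M H (k + 1)) := by
  induction k with
  | zero =>
    intro v _
    refine ⟨minpoly ℂ (hQuot g M H 1),
      fun s hs => ⟨s, 0, Module.End.hasEigenvalue_of_isRoot hs, le_rfl, by simp⟩, ?_⟩
    rw [← Submodule.Quotient.mk_eq_zero, ← Submodule.mkQ_apply,
      aeval_apply_of_comp_eq _ (Submodule.mapQ_mkQ _ _ _).symm]
    exact LinearMap.congr_fun (minpoly.aeval ℂ (hQuot g M H 1)) _
  | succ k ih =>
    refine Submodule.span_le.2 ?_
    rintro _ ⟨x, hx, v, hv, rfl⟩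
    obtain ⟨p, hpS, hp⟩ := ih hv
    refine Submodule.iSup_induction _ (motive := fun y => ⁅y, v⁆ ∈ annihModulo _ _ _ _) hx ?_
      (by simp) (fun a b ha hb => by rw [add_lie]; exact Submodule.add_mem _ ha hb)
    rintro ⟨z, hz⟩ y hy
    have hyz : ⁅H, y⁆ = (z : ℂ) • y := by simpa using Module.End.mem_eigenspace_iff.1 hy
    refine ⟨p.comp (X - C (z : ℂ)), fun a ha => ?_, ?_⟩
    · simpa using add_intCast_mem_shiftedEigenvalues g M (hpS _ (isRoot_comp.1 ha)) hz.le
    · rw [aeval_comp_X_sub_C_lie g M hyz]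
      exact lie_mem_fil_succ g M (Submodule.mem_iSup_of_mem ⟨z, hz⟩ hy) hp

theorem annihModulo_fil_eq_top (H : g) [FiniteDimensional ℂ (M ⧸ fil g M H 1)] (k : ℕ) :
    annihModulo (LieModule.toEnd ℂ g M H) (shiftedEigenvalues g M H) (fil g M H k)
      (fil_le_comap_toEnd g M H k) = ⊤ := by
  induction k with
  | zero => exact eq_top_iff.2 fun _ _ => ⟨1, by simp, trivial⟩
  | succ k ih =>
    exact eq_top_iff.2 <| ih ▸
      annihModulo_le_of_le_annihModulo _ _ (fil_le_annihModulo_fil_succ g M H k)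

theorem mem_shiftedEigenvalues_of_hasEigenvalue {H : g} [FiniteDimensional ℂ (M ⧸ fil g M H 1)]
    {k : ℕ} {α : ℂ} (hα : (hQuot g M H k).HasEigenvalue α) : α ∈ shiftedEigenvalues g M H :=
  mem_of_hasEigenvalue_mapQ _ (annihModulo_fil_eq_top g M H k) hα

theorem exists_hasEigenvalue_hQuot {H : g} {α : ℂ} (hα : E g M H α ≠ ⊥) :
    ∃ k, (hQuot g M H k).HasEigenvalue α := by
  have hev : (hhat g M H).HasEigenvalue α := Module.End.HasUnifEigenvalue.lt zero_lt_one hα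
  obtain ⟨w, hw, hw0⟩ := hev.exists_hasEigenvector
  obtain ⟨k, hk⟩ : ∃ k, w.1 k ≠ 0 := by
    by_contra! h
    exact hw0 (Subtype.ext (funext h))
  have hwk : hQuot g M H k (w.1 k) = α • w.1 k :=
    congrFun (congrArg Subtype.val (Module.End.mem_eigenspace_iff.1 hw)) k
  exact ⟨k, Module.End.hasEigenvalue_of_hasEigenvector ⟨Module.End.mem_eigenspace_iff.2 hwk, hk⟩⟩

theorem finiteDimensional_quotient_fil_one {H : g} (hFG : IsUnbarFG g M H) :
    FiniteDimensional ℂ (M ⧸ fil g M H 1) := by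
  obtain ⟨S, hS⟩ := hFG
  have hsup : fil g M H 1 ⊔ Submodule.span ℂ S = ⊤ :=
    hS _ (fun s hs => Submodule.mem_sup_right (Submodule.subset_span hs))
      (fun x hx m _ => Submodule.mem_sup_left (lie_mem_fil_succ g M hx trivial))
  rw [FiniteDimensional, Module.finite_def, ← (Submodule.map_mkQ_eq_top _ _).2 hsup]
  exact (Submodule.fg_span S.finite_toSet).map _

theorem finite_shiftedEigenvalues_re_gt (H : g) [FiniteDimensional ℂ (M ⧸ fil g M H 1)] (m : ℝ) :
    {α | α ∈ shiftedEigenvalues g M H ∧ m < α.re}.Finite := by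
  refine ((Module.End.finite_hasEigenvalue (hQuot g M H 1)).biUnion fun s _ =>
    (Set.finite_Icc ⌈m - s.re⌉ 0).image fun j : ℤ => s + j).subset ?_
  rintro _ ⟨⟨s, j, hs, hj, rfl⟩, hre⟩
  refine Set.mem_biUnion hs ⟨j, Set.mem_Icc.2 ⟨Int.ceil_le.2 ?_, hj⟩, rfl⟩
  simp only [Complex.add_re, Complex.intCast_re] at hre
  linarith

theorem eigenvalues_of_hhat_bounded
    (H : g) (hFG : IsUnbarFG g M H) :
    (∀ α : ℂ, E g M H α ≠ ⊥ →
      ∃ (s : ℂ) (j : ℤ), Module.End.HasEigenvalue (hQuot g M H 1) s ∧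
        j ≤ 0 ∧ α = s + (j : ℂ)) ∧
    (∀ m : ℝ, {α : ℂ | E g M H α ≠ ⊥ ∧ m < α.re}.Finite) := by
  have := finiteDimensional_quotient_fil_one g M hFG
  have hE : ∀ α, E g M H α ≠ ⊥ → α ∈ shiftedEigenvalues g M H := fun _ hα =>
    let ⟨_, hk⟩ := exists_hasEigenvalue_hQuot g M hα
    mem_shiftedEigenvalues_of_hasEigenvalue g M hk
  exact ⟨hE, fun m => (finite_shiftedEigenvalues_re_gt g M H m).subset
    fun α ⟨hα, hm⟩ => ⟨hE α hα, hm⟩⟩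

end GeomJacquet
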